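/- Let d ≥ 1, k = (k_1,…,k_d) positive integers, and let (𝓐_n)_{n≥0} be an interval filtration on a d-dimensional rectangle I. For each n, let 𝒞_n be the collection of all sets B = B^1 × ⋯ × B^d such that for every direction δ, B^δ is a union of at least one and at most 3k_δ consecutive atoms of 𝓐_n^δ. Suppose n ≤ n′, E ∈ 𝒞_n, F ∈ 𝒞_{n′}, t ∈ E ∩ F, and for every direction δ: E^δ and F^δ consist of the same number ℓ_δ of consecutive atoms (of 𝓐_n^δ and 𝓐_{n′}^δ respectively) and t lies in the m_δ-th atom, counted from the left, of both E^δ and F^δ. Then F ⊆ E. -/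
import Mathlib


open MeasureTheory Set

structure IntervalPartition where
  a : ℝ
  b : ℝ
  m : ℕ
  m_pos : 0 < m
  t : Fin (m + 1) → ℝ
  t_mono : StrictMono t
  t_first : t 0 = a
  t_last : t (Fin.last m) = b

namespace IntervalPartition

/-- The `i`-th breakpoint of the partition (extended to all of `ℕ`). -/
def pt (P : IntervalPartition) (i : ℕ) : ℝ :=
  P.t ⟨min i P.m, Nat.lt_succ_of_le (min_le_right _ _)⟩

/-- The underlying interval `[a, b)`. -/
def interval (P : IntervalPartition) : Set ℝ := Set.Ico P.a P.b

/-- The `i`-th atom of the partition, `[t_i, t_{i+1})`. -/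
def atomN (P : IntervalPartition) (i : ℕ) : Set ℝ := Set.Ico (P.pt i) (P.pt (i + 1))

/-- The length of the `i`-th atom. -/
def atomLen (P : IntervalPartition) (i : ℕ) : ℝ := P.pt (i + 1) - P.pt i

/-- Membership in the spline space `S_k(𝓕)`:  `(k-2)`-times continuously differentiable
on the interval and a polynomial of degree at most `k - 1` on each atom. -/
def IsSpline (k : ℕ) (P : IntervalPartition) (f : ℝ → ℝ) : Prop :=
  (2 ≤ k → ContDiffOn ℝ (k - 2 : ℕ) f P.interval) ∧
  ∀ i < P.m, ∃ p : Polynomial ℝ, p.natDegree ≤ k - 1 ∧ ∀ x ∈ P.atomN i, f x = p.eval x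

/-- `P.Refines Q` : `Q` is finer than `P` (same interval, more breakpoints). -/
def Refines (P Q : IntervalPartition) : Prop :=
  P.a = Q.a ∧ P.b = Q.b ∧ Set.range P.t ⊆ Set.range Q.t

/-- The pair `(i, j)` describes a B-spline support of order `r`:
the union of the consecutive atoms `i, …, j`, where either `j - i + 1 = r`, or
`j - i + 1 < r` and the union touches an endpoint of the interval. -/
def IsBSupportIdx (P : IntervalPartition) (r i j : ℕ) : Prop :=
  i ≤ j ∧ j < P.m ∧ (j + 1 - i = r ∨ (j + 1 - i < r ∧ (i = 0 ∨ j = P.m - 1)))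

/-- The B-spline support as a set. -/
def bSupportSet (P : IntervalPartition) (i j : ℕ) : Set ℝ := Set.Ico (P.pt i) (P.pt (j + 1))

/-- The length of a B-spline support. -/
def bSupportLen (P : IntervalPartition) (i j : ℕ) : ℝ := P.pt (j + 1) - P.pt i

/-- `k`-regularity with parameter `γ` of a single interval σ-algebra: any two B-spline
supports of order `k` at Euclidean distance zero have comparable lengths. -/
def KRegular (P : IntervalPartition) (k : ℕ) (γ : ℝ) : Prop :=
  ∀ i j i' j' : ℕ, P.IsBSupportIdx k i j → P.IsBSupportIdx k i' j' →
    P.pt i' ≤ P.pt (j + 1) → P.pt i ≤ P.pt (j' + 1) →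
    P.bSupportLen i j ≤ γ * P.bSupportLen i' j'

-- The index of the atom containing `x` (junk value if there is none).
open Classical in
noncomputable def idx (P : IntervalPartition) (x : ℝ) : ℕ :=
  if h : ∃ i, i < P.m ∧ x ∈ P.atomN i then h.choose else 0

end IntervalPartition

/-- The `d`-dimensional rectangle underlying a product of interval σ-algebras. -/
def rect {d : ℕ} (P : Fin d → IntervalPartition) : Set (Fin d → ℝ) :=
  Set.univ.pi fun δ => (P δ).interval

/-- The atom of the product σ-algebra with index vector `i`. -/
def prodAtomN {d : ℕ} (P : Fin d → IntervalPartition) (i : Fin d → ℕ) : Set (Fin d → ℝ) :=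
  Set.univ.pi fun δ => (P δ).atomN (i δ)

/-- `|d(A,B)|₁` for atoms with index vectors `i`, `j`. -/
def dist1 {d : ℕ} (i j : Fin d → ℕ) : ℕ := ∑ δ, ((i δ : ℤ) - (j δ : ℤ)).natAbs

/-- The volume of `conv(A, B)`, the smallest axis-parallel rectangle containing the
atoms with index vectors `i` and `j`. -/
def convVol {d : ℕ} (P : Fin d → IntervalPartition) (i j : Fin d → ℕ) : ℝ :=
  ∏ δ, ((P δ).pt (max (i δ) (j δ) + 1) - (P δ).pt (min (i δ) (j δ)))

/-- The kernel sum `Σ_A q^{|d(A, A_ix)|₁} / |conv(A, A_ix)| ∫_A |f|`. -/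
noncomputable def kern {d : ℕ} (P : Fin d → IntervalPartition) (q : ℝ)
    (f : (Fin d → ℝ) → ℝ) (ix : Fin d → ℕ) : ℝ :=
  ∑ ia : (∀ δ, Fin ((P δ).m)),
    q ^ dist1 (fun δ => (ia δ : ℕ)) ix / convVol P (fun δ => (ia δ : ℕ)) ix *
      ∫ y in prodAtomN P (fun δ => (ia δ : ℕ)), |f y|

namespace IntervalPartition

lemma pt_le_pt' (P : IntervalPartition) {i j : ℕ} (hij : i ≤ j) :
    P.pt i ≤ P.pt j := by
  apply P.t_mono.monotone
  simp only [Fin.mk_le_mk]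
  omega

lemma pt_lt_pt' (P : IntervalPartition) {i j : ℕ} (hij : i < j) (hj : j ≤ P.m) :
    P.pt i < P.pt j := by
  apply P.t_mono
  simp only [Fin.mk_lt_mk]
  omega

lemma lt_of_pt_lt_pt (P : IntervalPartition) {i j : ℕ} (hi : i ≤ P.m)
    (h : P.pt i < P.pt j) : i < j := by
  by_contra hc
  exact absurd (P.pt_le_pt' (le_of_not_gt hc)) (not_le.mpr h)

lemma refines_pt {P Q : IntervalPartition} (h : Set.range P.t ⊆ Set.range Q.t) (i : ℕ) :
    ∃ r ≤ Q.m, Q.pt r = P.pt i := by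
  obtain ⟨r, hr⟩ := h ⟨_, rfl⟩
  refine ⟨r.val, Nat.lt_succ_iff.mp r.isLt, ?_⟩
  unfold pt
  rw [show (⟨min r.val Q.m, _⟩ : Fin (Q.m + 1)) = r from
    Fin.ext (by simp [Nat.min_eq_left (Nat.lt_succ_iff.mp r.isLt)])]
  exact hr

/-- Down step of the nestedness induction. -/
lemma down_step {P Q : IntervalPartition} (hr : Set.range P.t ⊆ Set.range Q.t)
    {c f : ℕ} (hc : c + 1 ≤ P.m) (hf : f ≤ Q.m)
    (h : P.pt (c + 1) ≤ Q.pt (f + 1)) : P.pt c ≤ Q.pt f := by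
  obtain ⟨r, hrm, hre⟩ := refines_pt hr c
  have h1 : Q.pt r < Q.pt (f + 1) :=
    hre.trans_lt (lt_of_lt_of_le (P.pt_lt_pt' (Nat.lt_succ_self c) hc) h)
  have h2 : r < f + 1 := Q.lt_of_pt_lt_pt hrm h1
  calc P.pt c = Q.pt r := hre.symm
    _ ≤ Q.pt f := Q.pt_le_pt' (by omega)

/-- Up step of the nestedness induction. -/
lemma up_step {P Q : IntervalPartition} (hr : Set.range P.t ⊆ Set.range Q.t)
    {c f : ℕ} (hc : c + 1 ≤ P.m) (hf : f ≤ Q.m)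
    (h : Q.pt f ≤ P.pt c) : Q.pt (f + 1) ≤ P.pt (c + 1) := by
  obtain ⟨r, hrm, hre⟩ := refines_pt hr (c + 1)
  have h1 : Q.pt f < Q.pt r :=
    lt_of_le_of_lt h (hre.symm ▸ P.pt_lt_pt' (Nat.lt_succ_self c) hc)
  have h2 : f < r := Q.lt_of_pt_lt_pt hf h1
  calc Q.pt (f + 1) ≤ Q.pt r := Q.pt_le_pt' (by omega)
    _ = P.pt (c + 1) := hre

lemma down_iter {P Q : IntervalPartition} (hr : Set.range P.t ⊆ Set.range Q.t)
    {c f : ℕ} (hc : c ≤ P.m) (hf : f ≤ Q.m)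
    (h : P.pt c ≤ Q.pt f) : ∀ s, s ≤ c → s ≤ f → P.pt (c - s) ≤ Q.pt (f - s) := by
  intro s
  induction s with
  | zero => intro _ _; simpa using h
  | succ s ih =>
    intro hsc hsf
    have key : P.pt (c - s) ≤ Q.pt (f - s) := ih (by omega) (by omega)
    have e1 : c - s = (c - (s + 1)) + 1 := by omega
    have e2 : f - s = (f - (s + 1)) + 1 := by omega
    rw [e1, e2] at key
    exact down_step hr (by omega) (by omega) key

lemma up_iter {P Q : IntervalPartition} (hr : Set.range P.t ⊆ Set.range Q.t)
    {c f : ℕ} (h : Q.pt f ≤ P.pt c) :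
    ∀ s, c + s ≤ P.m → f + s ≤ Q.m → Q.pt (f + s) ≤ P.pt (c + s) := by
  intro s
  induction s with
  | zero => intro _ _; simpa using h
  | succ s ih =>
    intro hsc hsf
    have key : Q.pt (f + s) ≤ P.pt (c + s) := ih (by omega) (by omega)
    exact up_step hr (show (c + s) + 1 ≤ P.m by omega) (show f + s ≤ Q.m by omega) key

end IntervalPartition

lemma refines_range_mono {d : ℕ} (A : ℕ → Fin d → IntervalPartition)
    (hA : ∀ n δ, (A n δ).Refines (A (n + 1) δ)) (δ : Fin d) :
    ∀ {n n' : ℕ}, n ≤ n' → Set.range (A n δ).t ⊆ Set.range (A n' δ).t := by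
  intro n n' h
  induction n' with
  | zero => obtain rfl := Nat.le_zero.mp h; exact subset_rfl
  | succ m ih =>
    rcases Nat.le_succ_iff.mp h with h' | h'
    · exact (ih h').trans (hA m δ).2.2
    · obtain rfl := h'; exact subset_rfl

/-- **Nestedness of positionally equivalent sets (Section 5.2).** Let `(𝓐_n)` be an
interval filtration on a `d`-dimensional rectangle, `n ≤ n'`, `E ∈ 𝒞_n` and `F ∈ 𝒞_{n'}`
products of `l_δ` consecutive atoms (with `1 ≤ l_δ ≤ 3 k_δ`) in each direction, and
`t ∈ E ∩ F` a point lying, in every direction `δ`, in the `m_δ`-th atom from the left of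
both `E^δ` and `F^δ`.  Then `F ⊆ E`. -/
theorem positional_nestedness (d : ℕ) (hd : 1 ≤ d) (k : Fin d → ℕ) (hk : ∀ δ, 1 ≤ k δ)
    (A : ℕ → Fin d → IntervalPartition) (hA : ∀ n δ, (A n δ).Refines (A (n + 1) δ))
    (n n' : ℕ) (hnn' : n ≤ n')
    (iE iF l mm : Fin d → ℕ)
    (hl : ∀ δ, 1 ≤ l δ ∧ l δ ≤ 3 * k δ)
    (hE : ∀ δ, iE δ + l δ ≤ (A n δ).m)
    (hF : ∀ δ, iF δ + l δ ≤ (A n' δ).m)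
    (hm : ∀ δ, 1 ≤ mm δ ∧ mm δ ≤ l δ)
    (t : Fin d → ℝ)
    (htE : ∀ δ, t δ ∈ (A n δ).atomN (iE δ + (mm δ - 1)))
    (htF : ∀ δ, t δ ∈ (A n' δ).atomN (iF δ + (mm δ - 1))) :
    (Set.univ.pi fun δ => Set.Ico ((A n' δ).pt (iF δ)) ((A n' δ).pt (iF δ + l δ))) ⊆
      Set.univ.pi fun δ => Set.Ico ((A n δ).pt (iE δ)) ((A n δ).pt (iE δ + l δ)) := by
  
  intro x hx δ _
  have hrange := refines_range_mono A hA δ hnn'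
  obtain ⟨hm1, hm2⟩ := hm δ
  obtain ⟨hl1, _⟩ := hl δ
  have hEm := hE δ
  have hFm := hF δ
  obtain ⟨htE1, htE2⟩ := htE δ
  obtain ⟨htF1, htF2⟩ := htF δ
  -- the fine atom containing t is inside the coarse atom containing t
  have hleft : (A n δ).pt (iE δ + (mm δ - 1)) ≤ (A n' δ).pt (iF δ + (mm δ - 1)) := by
    obtain ⟨r, hrm, hre⟩ := IntervalPartition.refines_pt hrange (iE δ + (mm δ - 1))
    have h1 : (A n' δ).pt r < (A n' δ).pt (iF δ + (mm δ - 1) + 1) := by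
      rw [hre]; exact lt_of_le_of_lt htE1 htF2
    have h2 : r < iF δ + (mm δ - 1) + 1 := (A n' δ).lt_of_pt_lt_pt hrm h1
    rw [← hre]; exact (A n' δ).pt_le_pt' (by omega)
  have hright : (A n' δ).pt (iF δ + (mm δ - 1) + 1) ≤ (A n δ).pt (iE δ + (mm δ - 1) + 1) := by
    obtain ⟨r, hrm, hre⟩ := IntervalPartition.refines_pt hrange (iE δ + (mm δ - 1) + 1)
    have h1 : (A n' δ).pt (iF δ + (mm δ - 1)) < (A n' δ).pt r := by
      rw [hre]; exact lt_of_le_of_lt htF1 htE2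
    have h2 : iF δ + (mm δ - 1) < r := (A n' δ).lt_of_pt_lt_pt (by omega) h1
    rw [← hre]; exact (A n' δ).pt_le_pt' (by omega)
  have hL : (A n δ).pt (iE δ) ≤ (A n' δ).pt (iF δ) := by
    have := IntervalPartition.down_iter hrange (c := iE δ + (mm δ - 1))
      (f := iF δ + (mm δ - 1)) (by omega) (by omega) hleft (mm δ - 1) (by omega) (by omega)
    simpa [Nat.add_sub_cancel] using this
  have hR : (A n' δ).pt (iF δ + l δ) ≤ (A n δ).pt (iE δ + l δ) := by
    have := IntervalPartition.up_iter hrange hright (l δ - mm δ)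
      (by omega) (by omega)
    have e1 : iE δ + (mm δ - 1) + 1 + (l δ - mm δ) = iE δ + l δ := by omega
    have e2 : iF δ + (mm δ - 1) + 1 + (l δ - mm δ) = iF δ + l δ := by omega
    rwa [e1, e2] at this
  have hxδ := hx δ (Set.mem_univ δ)
  exact ⟨le_trans hL hxδ.1, lt_of_lt_of_le hxδ.2 hR⟩
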